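/- For every predictor class P ⊆ [0,1]^X, every distinguisher class D ⊆ [−1,1]^X, every distribution μ over X, every advantage bound ε > 0, and every failure probability bound δ ∈ (0,1), the sample complexity of distribution-specific realizable OI satisfies SAMP-DS-R(P,D,ε,δ,μ) ≤ O( ε^{−2} ( log N_{μ,Q}(D, ε/2) + log(2/δ) ) ) ≤ O( ε^{−2} ( log N_{μ,P}(D, ε/4) + log(2/δ) ) ), where Q = P − P = {p₁ − p₂ : p₁, p₂ ∈ P}. -/

import Mathlib

open scoped ENNReal Pointwise

noncomputable section

namespace OI

/-- Expectation of a real-valued function under a probability mass function. -/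
def pexp {α : Type*} (q : PMF α) (f : α → ℝ) : ℝ := ∑' a, (q a).toReal * f a

/-- Inner product of two functions w.r.t. the distribution `μ`. -/
def inn {X : Type*} (μ : PMF X) (f g : X → ℝ) : ℝ := pexp μ fun x => f x * g x

/-- Dual Minkowski (semi)norm of `f` w.r.t. the class `F`. -/
def dnorm {X : Type*} (μ : PMF X) (F : Set (X → ℝ)) (f : X → ℝ) : ℝ :=
  sSup ((fun g => |inn μ f g|) '' F)

/-- `C` is an ε-covering of `G` w.r.t. the seminorm defined by `F`. -/
def IsCover {X : Type*} (μ : PMF X) (F G : Set (X → ℝ)) (ε : ℝ) (C : Set (X → ℝ)) : Prop :=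
  C ⊆ G ∧ ∀ g ∈ G, ∃ c ∈ C, dnorm μ F (g - c) ≤ ε

/-- Covering number `N_{μ,F}(G, ε)` (`⊤` if no finite covering exists). -/
def covN {X : Type*} (μ : PMF X) (F G : Set (X → ℝ)) (ε : ℝ) : ℕ∞ :=
  ⨅ (C : Set (X → ℝ)) (_ : IsCover μ F G ε C), C.encard

/-- Base-2 logarithm of an extended natural number (junk value on `⊤`). -/
def elog2 (N : ℕ∞) : ℝ := Real.logb 2 (N.toNat : ℝ)

/-- Bernoulli distribution on `Bool` with mean (the truncation to `[0,1]` of) `r`. -/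
def bern (r : ℝ) : PMF Bool := PMF.bernoulli (min (Real.toNNReal r) 1) (min_le_right _ _)

/-- The distribution `μ_p` of individual-outcome pairs. -/
def exDist {X : Type*} (μ : PMF X) (p : X → ℝ) : PMF (X × Bool) :=
  μ.bind fun x => (bern (p x)).map fun o => (x, o)

/-- `n` i.i.d. samples from `q`. -/
def iid {α : Type*} (q : PMF α) : (n : ℕ) → PMF (Fin n → α)
  | 0 => PMF.pure Fin.elim0
  | n + 1 => (iid q n).bind fun v => q.map fun a => Fin.cons a v

/-- Probability of an event under a PMF. -/
def prob {α : Type*} (q : PMF α) (E : Set α) : ℝ≥0∞ := q.toOuterMeasure E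

/-- A (possibly randomized) `n`-sample learner. -/
abbrev Learner (X : Type*) (n : ℕ) := (Fin n → X × Bool) → PMF (X → ℝ)

/-- Distribution of the learner output on `n` i.i.d. samples from `μ_{p*}`. -/
def outDist {X : Type*} (μ : PMF X) (pstar : X → ℝ) {n : ℕ} (A : Learner X n) :
    PMF (X → ℝ) :=
  (iid (exDist μ pstar) n).bind A

/-- `p` is a predictor, i.e. takes values in `[0,1]`. -/
def Predictor {X : Type*} (p : X → ℝ) : Prop := ∀ x, p x ∈ Set.Icc (0 : ℝ) 1

/-- `d` takes values in `[-1,1]`. -/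
def Dist1 {X : Type*} (d : X → ℝ) : Prop := ∀ x, d x ∈ Set.Icc (-1 : ℝ) 1

/-- The class `[0,1]^X` of all predictors. -/
def allPred (X : Type*) : Set (X → ℝ) := {p | Predictor p}

/-- The learner `A` succeeds for target `pstar`: with probability at least `1 - δ` it outputs
a predictor whose maximum distinguishing advantage w.r.t. `pstar` over `D` is at most `ε`. -/
def Achieves {X : Type*} (μ : PMF X) (D : Set (X → ℝ)) (ε δ : ℝ) (pstar : X → ℝ) {n : ℕ}
    (A : Learner X n) : Prop :=
  ENNReal.ofReal (1 - δ) ≤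
    prob (outDist μ pstar A) {p | Predictor p ∧ dnorm μ D (p - pstar) ≤ ε}

/-- The agnostic benchmark `inf_{p' ∈ P} ‖p' - pstar‖_{μ,D}`. -/
def agTarget {X : Type*} (μ : PMF X) (P D : Set (X → ℝ)) (pstar : X → ℝ) : ℝ :=
  sInf ((fun p' => dnorm μ D (p' - pstar)) '' P)

/-- The learner `A` succeeds agnostically for target `pstar`. -/
def AchievesAg {X : Type*} (μ : PMF X) (P D : Set (X → ℝ)) (ε δ : ℝ) (pstar : X → ℝ) {n : ℕ}
    (A : Learner X n) : Prop :=
  ENNReal.ofReal (1 - δ) ≤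
    prob (outDist μ pstar A)
      {p | Predictor p ∧ dnorm μ D (p - pstar) ≤ agTarget μ P D pstar + ε}

/-- Distribution-specific realizable OI learner. -/
def DSRL {X : Type*} (μ : PMF X) (P D : Set (X → ℝ)) (ε δ : ℝ) (n : ℕ)
    (A : Learner X n) : Prop :=
  ∀ pstar ∈ P, Achieves μ D ε δ pstar A

/-- Distribution-specific agnostic OI learner. -/
def DSAL {X : Type*} (μ : PMF X) (P D : Set (X → ℝ)) (ε δ : ℝ) (n : ℕ)
    (A : Learner X n) : Prop :=
  ∀ pstar : X → ℝ, Predictor pstar → AchievesAg μ P D ε δ pstar A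

/-- Distribution-free realizable OI learner. -/
def DFRL {X : Type*} (P D : Set (X → ℝ)) (ε δ : ℝ) (n : ℕ) (A : Learner X n) : Prop :=
  ∀ μ : PMF X, DSRL μ P D ε δ n A

/-- Distribution-free agnostic OI learner. -/
def DFAL {X : Type*} (P D : Set (X → ℝ)) (ε δ : ℝ) (n : ℕ) (A : Learner X n) : Prop :=
  ∀ μ : PMF X, DSAL μ P D ε δ n A

/-- Sample complexity of distribution-specific realizable OI. -/
def SAMPDSR {X : Type*} (μ : PMF X) (P D : Set (X → ℝ)) (ε δ : ℝ) : ℕ∞ :=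
  ⨅ (n : ℕ) (_ : ∃ A : Learner X n, DSRL μ P D ε δ n A), (n : ℕ∞)

/-- Sample complexity of distribution-specific agnostic OI. -/
def SAMPDSA {X : Type*} (μ : PMF X) (P D : Set (X → ℝ)) (ε δ : ℝ) : ℕ∞ :=
  ⨅ (n : ℕ) (_ : ∃ A : Learner X n, DSAL μ P D ε δ n A), (n : ℕ∞)

/-- Sample complexity of distribution-free realizable OI. -/
def SAMPDFR {X : Type*} (P D : Set (X → ℝ)) (ε δ : ℝ) : ℕ∞ :=
  ⨅ (n : ℕ) (_ : ∃ A : Learner X n, DFRL P D ε δ n A), (n : ℕ∞)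

/-- Sample complexity of distribution-free agnostic OI. -/
def SAMPDFA {X : Type*} (P D : Set (X → ℝ)) (ε δ : ℝ) : ℕ∞ :=
  ⨅ (n : ℕ) (_ : ∃ A : Learner X n, DFAL P D ε δ n A), (n : ℕ∞)

/-- The points `x 0, …, x (n-1)` are `γ`-fat shattered by `F`. -/
def Shatters {X : Type*} (F : Set (X → ℝ)) (γ : ℝ) {n : ℕ} (x : Fin n → X) : Prop :=
  ∃ r : Fin n → ℝ, ∀ b : Fin n → Bool, ∃ f ∈ F,
    ∀ i, γ ≤ (if b i then (1 : ℝ) else -1) * (f (x i) - r i)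

/-- The `γ`-fat-shattering dimension of `F`. -/
def fatDim {X : Type*} (F : Set (X → ℝ)) (γ : ℝ) : ℕ∞ :=
  ⨆ (n : ℕ) (_ : ∃ x : Fin n → X, Shatters F γ x), (n : ℕ∞)

end OI


open OI

/-!
The learner fixes a finite `ε/2`-cover `C ⊆ D` for `‖·‖_{μ,P-P}`, estimates `⟨p*, c⟩_μ` for every
`c ∈ C` by the empirical mean of `o · c(x)`, and outputs any `p ∈ P` matching all these estimates
up to `ε/4`. A Chernoff bound (the moment generating function is controlled through
`eᵘ ≤ u + e^{u²}`) and a union bound over `C` make all estimates `ε/4`-accurate except with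
probability `2|C| e^{-nε²/256}`. Then `p*` itself is consistent, so `|⟨p - p*, c⟩_μ| ≤ ε/2` on `C`;
for `d ∈ D` and a `c ∈ C` close to it, `|⟨p - p*, d - c⟩_μ| ≤ ‖d - c‖_{μ,P-P} ≤ ε/2` since
`p - p* ∈ P - P`. For `ε > 1` no sample is needed. The comparison of covering numbers is
`‖f‖_{μ,P-P} ≤ 2 ‖f‖_{μ,P}`.
-/

namespace OI

open Real MeasureTheory

section Expectation

variable {α : Type*} {q : PMF α}

theorem tsum_toReal_apply (q : PMF α) : ∑' a, (q a).toReal = 1 := by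
  rw [← ENNReal.tsum_toReal_eq q.apply_ne_top, q.tsum_coe, ENNReal.toReal_one]

theorem summable_toReal_apply (q : PMF α) : Summable fun a => (q a).toReal :=
  ENNReal.summable_toReal q.tsum_coe_ne_top

theorem abs_toReal_mul_le {f : α → ℝ} {B : ℝ} (hf : ∀ a, |f a| ≤ B) (a : α) :
    |(q a).toReal * f a| ≤ (q a).toReal * B := by
  rw [abs_mul, ENNReal.abs_toReal]
  exact mul_le_mul_of_nonneg_left (hf a) ENNReal.toReal_nonneg

theorem summable_toReal_mul {f : α → ℝ} {B : ℝ} (hf : ∀ a, |f a| ≤ B) :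
    Summable fun a => (q a).toReal * f a :=
  Summable.of_norm_bounded ((summable_toReal_apply q).mul_right B) (abs_toReal_mul_le hf)

theorem abs_pexp_le {f : α → ℝ} {B : ℝ} (hf : ∀ a, |f a| ≤ B) : |pexp q f| ≤ B := by
  have hs := summable_toReal_mul (q := q) hf
  calc |pexp q f| ≤ ∑' a, |(q a).toReal * f a| := by
        simpa only [pexp, Real.norm_eq_abs] using norm_tsum_le_tsum_norm hs.norm
    _ ≤ ∑' a, (q a).toReal * B :=
        hs.abs.tsum_le_tsum (abs_toReal_mul_le hf) ((summable_toReal_apply q).mul_right B)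
    _ = B := by rw [tsum_mul_right, tsum_toReal_apply, one_mul]

theorem pexp_mono_of_nonneg {f g : α → ℝ} {B : ℝ} (hf : ∀ a, 0 ≤ f a) (hfg : ∀ a, f a ≤ g a)
    (hg : ∀ a, |g a| ≤ B) : pexp q f ≤ pexp q g := by
  have hfB (a : α) : |f a| ≤ B := by
    rw [abs_of_nonneg (hf a)]
    exact (hfg a).trans ((le_abs_self _).trans (hg a))
  exact (summable_toReal_mul hfB).tsum_le_tsum
    (fun a => mul_le_mul_of_nonneg_left (hfg a) ENNReal.toReal_nonneg) (summable_toReal_mul hg)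

theorem pexp_mul_add {f : α → ℝ} {B : ℝ} (hf : ∀ a, |f a| ≤ B) (c k : ℝ) :
    pexp q (fun a => c * f a + k) = c * pexp q f + k := by
  have hk := (summable_toReal_apply q).mul_right k
  simp only [pexp, mul_add, mul_left_comm _ c]
  rw [((summable_toReal_mul hf).mul_left c).tsum_add hk, tsum_mul_left, tsum_mul_right,
    tsum_toReal_apply, one_mul]

theorem pexp_sub {f g : α → ℝ} {A B : ℝ} (hf : ∀ a, |f a| ≤ A) (hg : ∀ a, |g a| ≤ B) :
    pexp q (fun a => f a - g a) = pexp q f - pexp q g := by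
  simp only [pexp, mul_sub]
  exact (summable_toReal_mul hf).tsum_sub (summable_toReal_mul hg)

theorem pexp_neg (f : α → ℝ) : pexp q (fun a => -f a) = -pexp q f := by
  simp only [pexp, mul_neg, tsum_neg]

end Expectation

theorem exp_le_add_exp_sq (u : ℝ) : exp u ≤ u + exp (u ^ 2) := by
  have hsq := add_one_le_exp (u ^ 2)
  rcases le_or_gt |u| 1 with hu | hu
  · linarith [(abs_le.mp (abs_exp_sub_one_sub_id_le hu)).2]
  · rcases le_or_gt 0 u with hu0 | hu0
    · rw [abs_of_nonneg hu0] at hu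
      linarith [exp_le_exp.mpr (show u ≤ u ^ 2 by nlinarith)]
    · rw [abs_of_neg hu0] at hu
      linarith [exp_lt_one_iff.mpr hu0, show -u ≤ u ^ 2 by nlinarith]

section Chernoff

variable {α β : Type*}

def lexp (q : PMF α) (g : α → ℝ≥0∞) : ℝ≥0∞ := ∑' a, q a * g a

theorem lexp_const_mul (q : PMF α) (c : ℝ≥0∞) (g : α → ℝ≥0∞) :
    lexp q (fun a => c * g a) = c * lexp q g := by
  simp only [lexp, mul_left_comm _ c, ENNReal.tsum_mul_left]

theorem lexp_pure (a : α) (g : α → ℝ≥0∞) : lexp (PMF.pure a) g = g a := by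
  rw [lexp, tsum_eq_single a fun b hb => by simp [PMF.pure_apply, hb]]
  simp

theorem lexp_bind (q : PMF α) (k : α → PMF β) (g : β → ℝ≥0∞) :
    lexp (q.bind k) g = lexp q fun a => lexp (k a) g := by
  simp only [lexp, PMF.bind_apply, ← ENNReal.tsum_mul_right, mul_assoc, ← ENNReal.tsum_mul_left]
  exact ENNReal.tsum_comm

theorem lexp_map (q : PMF α) (f : α → β) (g : β → ℝ≥0∞) :
    lexp (q.map f) g = lexp q (g ∘ f) := by
  simp only [PMF.map, lexp_bind, Function.comp_apply, lexp_pure]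
  rfl

theorem lexp_iid_prod (q : PMF α) (g : α → ℝ≥0∞) :
    ∀ n, lexp (iid q n) (fun s => ∏ i, g (s i)) = lexp q g ^ n
  | 0 => by simp [iid, lexp_pure]
  | n + 1 => by
    have hcons (s : Fin n → α) :
        lexp (q.map fun a => Fin.cons a s) (fun s' => ∏ i, g (s' i)) = lexp q g * ∏ i, g (s i) := by
      simp only [lexp_map, Function.comp_def, Fin.prod_univ_succ, Fin.cons_zero, Fin.cons_succ]
      simp only [lexp, ← mul_assoc, ENNReal.tsum_mul_right]
    rw [iid, lexp_bind]
    simp only [hcons, lexp_const_mul, lexp_iid_prod q g n, pow_succ, mul_comm]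

theorem prob_le_lexp (q : PMF α) {E : Set α} {g : α → ℝ≥0∞} (hg : ∀ a ∈ E, 1 ≤ g a) :
    prob q E ≤ lexp q g := by
  rw [prob, PMF.toOuterMeasure_apply]
  refine ENNReal.tsum_le_tsum fun a => ?_
  by_cases ha : a ∈ E
  · simpa [Set.indicator_of_mem ha] using mul_le_mul_right (hg a ha) (q a)
  · simp [Set.indicator_of_notMem ha]

theorem lexp_ofReal (q : PMF α) {f : α → ℝ} (hf : ∀ a, 0 ≤ f a) {B : ℝ} (hfB : ∀ a, f a ≤ B) :
    lexp q (fun a => ENNReal.ofReal (f a)) = ENNReal.ofReal (pexp q f) := by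
  have hf' (a : α) : |f a| ≤ B := by rw [abs_of_nonneg (hf a)]; exact hfB a
  rw [lexp, pexp, ENNReal.ofReal_tsum_of_nonneg (fun a => mul_nonneg ENNReal.toReal_nonneg (hf a))
    (summable_toReal_mul hf')]
  simp only [ENNReal.ofReal_mul ENNReal.toReal_nonneg, ENNReal.ofReal_toReal (q.apply_ne_top _)]

variable {q : PMF α} {h : α → ℝ}

theorem pexp_exp_le (hh : ∀ a, |h a| ≤ 1) (lam t : ℝ) :
    pexp q (fun a => exp (lam * (h a - pexp q h - t))) ≤ exp (4 * lam ^ 2 - lam * t) := by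
  set m := pexp q h
  have hm : |m| ≤ 1 := abs_pexp_le hh
  set K := exp (4 * lam ^ 2)
  set e := exp (-(lam * t))
  have hpt (a : α) : exp (lam * (h a - m - t)) ≤ e * lam * h a + e * (K - lam * m) := by
    have hdev : (h a - m) ^ 2 ≤ 4 := by
      have := abs_le.mp (hh a)
      have := abs_le.mp hm
      nlinarith
    have hsq : exp ((lam * (h a - m)) ^ 2) ≤ K :=
      exp_le_exp.mpr (by rw [mul_pow]; nlinarith [sq_nonneg lam])
    have hsplit : exp (lam * (h a - m - t)) = e * exp (lam * (h a - m)) := by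
      rw [← exp_add]; ring_nf
    rw [hsplit]
    nlinarith [exp_le_add_exp_sq (lam * (h a - m)), exp_pos (-(lam * t))]
  have hbdd (a : α) : |e * lam * h a + e * (K - lam * m)| ≤ |e * lam| + |e * (K - lam * m)| := by
    refine (abs_add_le _ _).trans (add_le_add ?_ le_rfl)
    rw [abs_mul]
    exact mul_le_of_le_one_right (abs_nonneg _) (hh a)
  calc pexp q (fun a => exp (lam * (h a - m - t)))
      ≤ pexp q (fun a => e * lam * h a + e * (K - lam * m)) :=
        pexp_mono_of_nonneg (fun _ => (exp_pos _).le) hpt hbdd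
    _ = exp (4 * lam ^ 2 - lam * t) := by
        have hKe : exp (4 * lam ^ 2 - lam * t) = K * e := by rw [sub_eq_add_neg, exp_add]
        rw [pexp_mul_add hh, hKe]
        ring

theorem prob_iid_sum_ge_le (hh : ∀ a, |h a| ≤ 1) {t : ℝ} (ht : 0 ≤ t) (n : ℕ) :
    prob (iid q n) {s | n * (pexp q h + t) ≤ ∑ i, h (s i)} ≤
      ENNReal.ofReal (exp (-(n * t ^ 2 / 16))) := by
  set m := pexp q h
  have hm : |m| ≤ 1 := abs_pexp_le hh
  -- the exponential moment at `t / 8`, which minimises `4 λ² - λ t`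
  set φ : α → ℝ := fun a => exp (t / 8 * (h a - m - t))
  have hφ_le (a : α) : φ a ≤ exp (t / 4) := by
    have := abs_le.mp (hh a)
    have := abs_le.mp hm
    exact exp_le_exp.mpr (by nlinarith)
  have hmarkov (s : Fin n → α) (hs : s ∈ {s | n * (m + t) ≤ ∑ i, h (s i)}) :
      1 ≤ ∏ i, ENNReal.ofReal (φ (s i)) := by
    have hsum : ∑ i, t / 8 * (h (s i) - m - t) = t / 8 * (∑ i, h (s i) - n * (m + t)) := by
      simp only [← Finset.mul_sum, Finset.sum_sub_distrib, Finset.sum_const, Finset.card_univ,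
        Fintype.card_fin, nsmul_eq_mul]
      ring
    rw [← ENNReal.ofReal_prod_of_nonneg fun i _ => (exp_pos _).le, ← exp_sum, hsum]
    exact ENNReal.one_le_ofReal.mpr (one_le_exp (mul_nonneg (by positivity) (sub_nonneg.mpr hs)))
  calc prob (iid q n) {s | n * (m + t) ≤ ∑ i, h (s i)}
      ≤ lexp (iid q n) fun s => ∏ i, ENNReal.ofReal (φ (s i)) := prob_le_lexp _ hmarkov
    _ = ENNReal.ofReal (pexp q φ) ^ n := by
        rw [lexp_iid_prod q (fun a => ENNReal.ofReal (φ a)),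
          lexp_ofReal q (fun _ => (exp_pos _).le) hφ_le]
    _ ≤ ENNReal.ofReal (exp (-(t ^ 2 / 16))) ^ n := by
        gcongr
        exact (pexp_exp_le hh _ _).trans_eq (by ring_nf)
    _ = ENNReal.ofReal (exp (-(n * t ^ 2 / 16))) := by
        rw [← ENNReal.ofReal_pow (exp_pos _).le, ← exp_nat_mul]
        ring_nf

theorem prob_iid_abs_mean_sub_gt_le (hh : ∀ a, |h a| ≤ 1) {t : ℝ} (ht : 0 ≤ t) (n : ℕ) :
    prob (iid q n) {s | t < |(∑ i, h (s i)) / n - pexp q h|} ≤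
      2 * ENNReal.ofReal (exp (-(n * t ^ 2 / 16))) := by
  have hsub : {s : Fin n → α | t < |(∑ i, h (s i)) / n - pexp q h|} ⊆
      {s | n * (pexp q h + t) ≤ ∑ i, h (s i)} ∪
        {s | n * (pexp q (fun a => -h a) + t) ≤ ∑ i, -h (s i)} := by
    intro s hs
    rcases Nat.eq_zero_or_pos n with rfl | hn
    · simp
    have hS : ∑ i, h (s i) = n * ((∑ i, h (s i)) / n) := by field_simp
    simp only [Set.mem_ofPred_eq, Set.mem_union, pexp_neg, Finset.sum_neg_distrib] at hs ⊢
    rcases lt_abs.mp hs with hs | hs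
    · left
      rw [hS]
      exact mul_le_mul_of_nonneg_left (by linarith) (Nat.cast_nonneg n)
    · right
      rw [hS]
      nlinarith [(Nat.cast_pos.mpr hn : (0 : ℝ) < n)]
  calc prob (iid q n) {s | t < |(∑ i, h (s i)) / n - pexp q h|}
      ≤ prob (iid q n) {s | n * (pexp q h + t) ≤ ∑ i, h (s i)} +
          prob (iid q n) {s | n * (pexp q (fun a => -h a) + t) ≤ ∑ i, -h (s i)} :=
        (measure_mono hsub).trans (measure_union_le _ _)
    _ ≤ 2 * ENNReal.ofReal (exp (-(n * t ^ 2 / 16))) := by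
        rw [two_mul]
        exact add_le_add (prob_iid_sum_ge_le hh ht n)
          (prob_iid_sum_ge_le (by simpa only [abs_neg] using hh) ht n)

end Chernoff

theorem ofReal_one_sub_le_prob {α : Type*} (q : PMF α) {E : Set α} {δ : ℝ} (hδ : 0 ≤ δ)
    (h : prob q Eᶜ ≤ ENNReal.ofReal δ) : ENNReal.ofReal (1 - δ) ≤ prob q E := by
  rw [ENNReal.ofReal_sub 1 hδ, ENNReal.ofReal_one, tsub_le_iff_right]
  calc 1 = prob q (E ∪ Eᶜ) := by
        rw [Set.union_compl_self]
        exact ((q.toOuterMeasure_apply_eq_one_iff _).mpr (Set.subset_univ _)).symm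
    _ ≤ prob q E + prob q Eᶜ := measure_union_le _ _
    _ ≤ prob q E + ENNReal.ofReal δ := add_le_add le_rfl h

section InnerProduct

variable {X : Type*} {μ : PMF X}

theorem Predictor.abs_le_one {p : X → ℝ} (hp : Predictor p) (x : X) : |p x| ≤ 1 :=
  abs_le.mpr ⟨by linarith [(hp x).1], (hp x).2⟩

theorem Dist1.abs_le_one {d : X → ℝ} (hd : Dist1 d) (x : X) : |d x| ≤ 1 :=
  abs_le.mpr (hd x)

theorem abs_le_one_of_mem_sub {P : Set (X → ℝ)} (hP : ∀ p ∈ P, Predictor p) {f : X → ℝ}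
    (hf : f ∈ P - P) (x : X) : |f x| ≤ 1 := by
  obtain ⟨p, hp, p', hp', rfl⟩ := hf
  exact abs_sub_le_of_nonneg_of_le (hP p hp x).1 (hP p hp x).2 (hP p' hp' x).1 (hP p' hp' x).2

theorem inn_comm (f g : X → ℝ) : inn μ f g = inn μ g f := by
  simp only [inn, mul_comm]

theorem abs_mul_apply_le {f g : X → ℝ} {A B : ℝ} (hf : ∀ x, |f x| ≤ A) (hg : ∀ x, |g x| ≤ B)
    (x : X) : |f x * g x| ≤ A * B := by
  rw [abs_mul]
  exact mul_le_mul (hf x) (hg x) (abs_nonneg _) ((abs_nonneg _).trans (hf x))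

theorem abs_inn_le {f g : X → ℝ} {A B : ℝ} (hf : ∀ x, |f x| ≤ A) (hg : ∀ x, |g x| ≤ B) :
    |inn μ f g| ≤ A * B :=
  abs_pexp_le (abs_mul_apply_le hf hg)

theorem inn_sub_right {f g g' : X → ℝ} {A B B' : ℝ} (hf : ∀ x, |f x| ≤ A)
    (hg : ∀ x, |g x| ≤ B) (hg' : ∀ x, |g' x| ≤ B') :
    inn μ f (g - g') = inn μ f g - inn μ f g' := by
  simp only [inn, Pi.sub_apply, mul_sub]
  exact pexp_sub (abs_mul_apply_le hf hg) (abs_mul_apply_le hf hg')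

theorem dnorm_nonneg (F : Set (X → ℝ)) (f : X → ℝ) : 0 ≤ dnorm μ F f :=
  Real.sSup_nonneg (by rintro _ ⟨g, -, rfl⟩; exact abs_nonneg _)

theorem dnorm_le {F : Set (X → ℝ)} {f : X → ℝ} {ε : ℝ} (hε : 0 ≤ ε)
    (h : ∀ g ∈ F, |inn μ f g| ≤ ε) : dnorm μ F f ≤ ε :=
  Real.sSup_le (by rintro _ ⟨g, hg, rfl⟩; exact h g hg) hε

theorem abs_inn_le_dnorm {F : Set (X → ℝ)} {f g : X → ℝ} {A B : ℝ} (hf : ∀ x, |f x| ≤ A)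
    (hF : ∀ g ∈ F, ∀ x, |g x| ≤ B) (hg : g ∈ F) : |inn μ f g| ≤ dnorm μ F f :=
  le_csSup ⟨A * B, by rintro _ ⟨g', hg', rfl⟩; exact abs_inn_le hf (hF g' hg')⟩ ⟨g, hg, rfl⟩

end InnerProduct

section Covering

variable {X : Type*} {μ : PMF X} {P G : Set (X → ℝ)}

theorem dnorm_sub_sub_le (hP : ∀ p ∈ P, Predictor p) {f : X → ℝ} {A : ℝ}
    (hf : ∀ x, |f x| ≤ A) : dnorm μ (P - P) f ≤ 2 * dnorm μ P f := by
  refine dnorm_le (by linarith [dnorm_nonneg (μ := μ) P f]) ?_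
  rintro _ ⟨p, hp, p', hp', rfl⟩
  have hPb : ∀ p ∈ P, ∀ x, |p x| ≤ 1 := fun p hp => (hP p hp).abs_le_one
  rw [inn_sub_right hf (hPb p hp) (hPb p' hp')]
  calc |inn μ f p - inn μ f p'| ≤ |inn μ f p| + |inn μ f p'| := abs_sub _ _
    _ ≤ 2 * dnorm μ P f := by
      linarith [abs_inn_le_dnorm hf hPb hp (μ := μ), abs_inn_le_dnorm hf hPb hp' (μ := μ)]

theorem covN_sub_le (hP : ∀ p ∈ P, Predictor p) {B : ℝ} (hG : ∀ g ∈ G, ∀ x, |g x| ≤ B)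
    (ε : ℝ) : covN μ (P - P) G (2 * ε) ≤ covN μ P G ε := by
  refine le_iInf₂ fun C ⟨hCG, hcov⟩ => iInf₂_le C ⟨hCG, fun g hg => ?_⟩
  obtain ⟨c, hc, hgc⟩ := hcov g hg
  have hgc_bdd (x : X) : |(g - c) x| ≤ B + B :=
    (abs_sub _ _).trans (add_le_add (hG g hg x) (hG c (hCG hc) x))
  exact ⟨c, hc, (dnorm_sub_sub_le hP hgc_bdd).trans (by linarith)⟩

theorem exists_finset_isCover_card_eq {F : Set (X → ℝ)} {ε : ℝ} (h : covN μ F G ε ≠ ⊤) :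
    ∃ C : Finset (X → ℝ), IsCover μ F G ε C ∧ (C.card : ℕ∞) = covN μ F G ε := by
  rw [covN, iInf_subtype'] at h ⊢
  have : Nonempty {C // IsCover μ F G ε C} := by
    by_contra hempty
    exact h (by simp [not_nonempty_iff.mp hempty])
  obtain ⟨⟨C, hC⟩, hCmin⟩ := ENat.exists_eq_iInf fun C : {C // IsCover μ F G ε C} => C.1.encard
  have hfin : C.Finite := Set.encard_ne_top_iff.mp (hCmin ▸ h)
  exact ⟨hfin.toFinset, by simpa using hC, by rw [← hCmin, hfin.encard_eq_coe_toFinset_card]⟩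

theorem dnorm_sub_le_of_isCover (hP : ∀ p ∈ P, Predictor p) {D C : Set (X → ℝ)}
    (hD : ∀ d ∈ D, Dist1 d) {ε : ℝ} (hε : 0 ≤ ε) (hC : IsCover μ (P - P) D (ε / 2) C)
    {p p' : X → ℝ} (hp : p ∈ P) (hp' : p' ∈ P)
    (hpC : ∀ c ∈ C, |inn μ p c - inn μ p' c| ≤ ε / 2) : dnorm μ D (p - p') ≤ ε := by
  refine dnorm_le hε fun d hd => ?_
  obtain ⟨c, hc, hdc⟩ := hC.2 d hd
  have hd1 := (hD d hd).abs_le_one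
  have hc1 := (hD c (hC.1 hc)).abs_le_one
  have hpp' := abs_le_one_of_mem_sub hP (Set.sub_mem_sub hp hp')
  have hdc_bdd (x : X) : |(d - c) x| ≤ 1 + 1 := (abs_sub _ _).trans (add_le_add (hd1 x) (hc1 x))
  have hsplit : inn μ (p - p') d = inn μ (d - c) (p - p') + (inn μ p c - inn μ p' c) := by
    rw [inn_comm (d - c), inn_sub_right hpp' hd1 hc1, inn_comm _ c,
      inn_sub_right hc1 (hP p hp).abs_le_one (hP p' hp').abs_le_one, inn_comm c, inn_comm c]
    ring
  have hnear : |inn μ (d - c) (p - p')| ≤ ε / 2 :=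
    (abs_inn_le_dnorm hdc_bdd (fun _ => abs_le_one_of_mem_sub hP) (Set.sub_mem_sub hp hp')).trans
      hdc
  rw [hsplit]
  linarith [abs_add_le (inn μ (d - c) (p - p')) (inn μ p c - inn μ p' c), hpC c hc]

end Covering

section Sampling

variable {X : Type*} {μ : PMF X}

def outcomeMul (c : X → ℝ) (z : X × Bool) : ℝ := if z.2 then c z.1 else 0

theorem exDist_apply_true (μ : PMF X) (p : X → ℝ) (x : X) :
    exDist μ p (x, true) = μ x * bern (p x) true := by
  rw [exDist, PMF.bind_apply, tsum_eq_single x fun x' hx' => ?_]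
  · simp [PMF.map_apply]
  · simp [PMF.map_apply, Ne.symm hx']

theorem bern_true_toReal {r : ℝ} (h0 : 0 ≤ r) (h1 : r ≤ 1) : (bern r true).toReal = r := by
  change ((min r.toNNReal 1 : NNReal) : ℝ≥0∞).toReal = r
  rw [min_eq_left (Real.toNNReal_le_one.mpr h1), ENNReal.coe_toReal, Real.coe_toNNReal _ h0]

theorem pexp_exDist_outcomeMul {p : X → ℝ} (hp : Predictor p) (c : X → ℝ) :
    pexp (exDist μ p) (outcomeMul c) = inn μ p c := by
  have hsupp : Function.support (fun z => (exDist μ p z).toReal * outcomeMul c z) ⊆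
      Set.range fun x => (x, true) := by
    rintro ⟨x, (_ | _)⟩ hz
    · simp [outcomeMul] at hz
    · exact ⟨x, rfl⟩
  have hinj : (fun x : X => (x, true)).Injective := fun _ _ h => congrArg Prod.fst h
  rw [pexp, ← hinj.tsum_eq hsupp]
  refine tsum_congr fun x => ?_
  rw [exDist_apply_true, ENNReal.toReal_mul, bern_true_toReal (hp x).1 (hp x).2]
  simp [outcomeMul, mul_assoc, mul_left_comm]

end Sampling

section Learner

variable {X : Type*} {μ : PMF X} {P D : Set (X → ℝ)}

theorem prob_outDist_pure {n : ℕ} (f : (Fin n → X × Bool) → X → ℝ) (pstar : X → ℝ)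
    (E : Set (X → ℝ)) :
    prob (outDist μ pstar fun s => PMF.pure (f s)) E = prob (iid (exDist μ pstar) n) (f ⁻¹' E) :=
  PMF.toOuterMeasure_map_apply f _ E

theorem sampdsr_le {ε δ : ℝ} {n : ℕ} {A : Learner X n} (hA : DSRL μ P D ε δ n A) :
    SAMPDSR μ P D ε δ ≤ n :=
  iInf₂_le n ⟨A, hA⟩

theorem dsrl_const (hP : ∀ p ∈ P, Predictor p) (hD : ∀ d ∈ D, Dist1 d) {p₀ : X → ℝ}
    (hp₀ : p₀ ∈ P) {ε δ : ℝ} (hε : 1 ≤ ε) (hδ : 0 ≤ δ) (n : ℕ) :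
    DSRL μ P D ε δ n fun _ => PMF.pure p₀ := by
  intro pstar hpstar
  have hdiff := abs_le_one_of_mem_sub hP (Set.sub_mem_sub hp₀ hpstar)
  have hgood : dnorm μ D (p₀ - pstar) ≤ ε :=
    (dnorm_le zero_le_one fun d hd => (abs_inn_le hdiff (hD d hd).abs_le_one).trans_eq
      (one_mul 1)).trans hε
  unfold Achieves
  rw [prob_outDist_pure (fun _ => p₀), Set.preimage_const_of_mem (show p₀ ∈ {p | Predictor p ∧
    dnorm μ D (p - pstar) ≤ ε} from ⟨hP p₀ hp₀, hgood⟩), prob,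
    (PMF.toOuterMeasure_apply_eq_one_iff _ _).mpr (Set.subset_univ _)]
  exact ENNReal.ofReal_le_one.mpr (by linarith)

def empInn {n : ℕ} (c : X → ℝ) (s : Fin n → X × Bool) : ℝ := (∑ i, outcomeMul c (s i)) / n

/-- An unspecified function when no `p ∈ P` is consistent with the sample `s`. -/
def consistentChoice (μ : PMF X) (P : Set (X → ℝ)) (C : Finset (X → ℝ)) (t : ℝ) {n : ℕ}
    (s : Fin n → X × Bool) : X → ℝ :=
  Classical.epsilon fun p => p ∈ P ∧ ∀ c ∈ C, |inn μ p c - empInn c s| ≤ t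

theorem consistentChoice_spec {C : Finset (X → ℝ)} {t : ℝ} {n : ℕ} {s : Fin n → X × Bool}
    {pstar : X → ℝ} (hpstar : pstar ∈ P) (hs : ∀ c ∈ C, |empInn c s - inn μ pstar c| ≤ t) :
    consistentChoice μ P C t s ∈ P ∧
      ∀ c ∈ C, |inn μ (consistentChoice μ P C t s) c - inn μ pstar c| ≤ 2 * t := by
  obtain ⟨hp, hpC⟩ : consistentChoice μ P C t s ∈ P ∧
      ∀ c ∈ C, |inn μ (consistentChoice μ P C t s) c - empInn c s| ≤ t := Classical.epsilon_spec
    (p := fun p => p ∈ P ∧ ∀ c ∈ C, |inn μ p c - empInn c s| ≤ t)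
    ⟨pstar, hpstar, fun c hc => abs_sub_comm (empInn c s) _ ▸ hs c hc⟩
  refine ⟨hp, fun c hc => ?_⟩
  linarith [abs_sub_le (inn μ (consistentChoice μ P C t s) c) (empInn c s) (inn μ pstar c),
    hpC c hc, hs c hc]

theorem prob_exists_abs_empInn_sub_gt_le {pstar : X → ℝ} (hpstar : Predictor pstar)
    {C : Finset (X → ℝ)} (hC : ∀ c ∈ C, ∀ x, |c x| ≤ 1) {t : ℝ} (ht : 0 ≤ t) (n : ℕ) :
    prob (iid (exDist μ pstar) n) {s | ∃ c ∈ C, t < |empInn c s - inn μ pstar c|} ≤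
      2 * C.card * ENNReal.ofReal (exp (-(n * t ^ 2 / 16))) := by
  have hset : {s : Fin n → X × Bool | ∃ c ∈ C, t < |empInn c s - inn μ pstar c|} =
      ⋃ c ∈ C, {s | t < |empInn c s - inn μ pstar c|} := by
    ext
    simp
  have htail (c : X → ℝ) (hc : c ∈ C) :
      prob (iid (exDist μ pstar) n) {s | t < |empInn c s - inn μ pstar c|} ≤
        2 * ENNReal.ofReal (exp (-(n * t ^ 2 / 16))) := by
    have hbdd (z : X × Bool) : |outcomeMul c z| ≤ 1 := by
      rcases z with ⟨x, _ | _⟩ <;> simp [outcomeMul, hC c hc x]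
    simpa only [empInn, pexp_exDist_outcomeMul hpstar] using
      prob_iid_abs_mean_sub_gt_le (q := exDist μ pstar) hbdd ht n
  rw [hset]
  calc prob (iid (exDist μ pstar) n) (⋃ c ∈ C, {s | t < |empInn c s - inn μ pstar c|})
      ≤ ∑ c ∈ C, prob (iid (exDist μ pstar) n) {s | t < |empInn c s - inn μ pstar c|} :=
        measure_biUnion_finset_le _ _
    _ ≤ ∑ _c ∈ C, 2 * ENNReal.ofReal (exp (-(n * t ^ 2 / 16))) := Finset.sum_le_sum htail
    _ = 2 * C.card * ENNReal.ofReal (exp (-(n * t ^ 2 / 16))) := by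
        rw [Finset.sum_const, nsmul_eq_mul]
        ring

theorem dsrl_consistentChoice (hP : ∀ p ∈ P, Predictor p) (hD : ∀ d ∈ D, Dist1 d) {ε δ : ℝ}
    (hε : 0 ≤ ε) {C : Finset (X → ℝ)} (hC : IsCover μ (P - P) D (ε / 2) C) {n : ℕ}
    (hn : 2 * C.card * exp (-(n * ε ^ 2 / 256)) ≤ δ) :
    DSRL μ P D ε δ n fun s => PMF.pure (consistentChoice μ P C (ε / 4) s) := by
  intro pstar hpstar
  have hδ : 0 ≤ δ := le_trans (by positivity) hn
  set G := {s : Fin n → X × Bool | ∀ c ∈ C, |empInn c s - inn μ pstar c| ≤ ε / 4}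
  have hbad : prob (iid (exDist μ pstar) n) Gᶜ ≤ ENNReal.ofReal δ := by
    have hCbdd (c : X → ℝ) (hc : c ∈ C) : ∀ x, |c x| ≤ 1 := (hD c (hC.1 hc)).abs_le_one
    have hG : Gᶜ = {s | ∃ c ∈ C, ε / 4 < |empInn c s - inn μ pstar c|} := by
      ext
      simp [G]
    calc prob (iid (exDist μ pstar) n) Gᶜ
        ≤ 2 * C.card * ENNReal.ofReal (exp (-(n * (ε / 4) ^ 2 / 16))) :=
          hG ▸ prob_exists_abs_empInn_sub_gt_le (hP pstar hpstar) hCbdd (by positivity) n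
      _ = ENNReal.ofReal (2 * C.card * exp (-(n * ε ^ 2 / 256))) := by
          rw [ENNReal.ofReal_mul (by positivity), ENNReal.ofReal_mul zero_le_two]
          norm_num
          ring_nf
      _ ≤ ENNReal.ofReal δ := ENNReal.ofReal_le_ofReal hn
  unfold Achieves
  rw [prob_outDist_pure]
  refine (ofReal_one_sub_le_prob _ hδ hbad).trans (measure_mono fun s hs => ?_)
  obtain ⟨hp, hpC⟩ := consistentChoice_spec hpstar hs
  exact ⟨hP _ hp, dnorm_sub_le_of_isCover hP hD hε hC hp hpstar fun c hc =>
    (hpC c hc).trans_eq (by ring)⟩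

end Learner

section SampleSize

variable {ε δ : ℝ}

theorem two_mul_exp_neg_ceil_le (N : ℕ) (hε : 0 < ε) (hδ : 0 < δ) :
    2 * N * exp (-(⌈256 * ε⁻¹ ^ 2 * log (2 * N / δ)⌉₊ * ε ^ 2 / 256)) ≤ δ := by
  rcases Nat.eq_zero_or_pos N with rfl | hN
  · simpa using hδ.le
  set L := log (2 * N / δ)
  have hL : L ≤ ⌈256 * ε⁻¹ ^ 2 * L⌉₊ * ε ^ 2 / 256 :=
    calc L = 256 * ε⁻¹ ^ 2 * L * ε ^ 2 / 256 := by field_simp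
      _ ≤ ⌈256 * ε⁻¹ ^ 2 * L⌉₊ * ε ^ 2 / 256 := by gcongr; exact Nat.le_ceil _
  calc 2 * N * exp (-(⌈256 * ε⁻¹ ^ 2 * L⌉₊ * ε ^ 2 / 256)) ≤ 2 * N * exp (-L) := by gcongr
    _ = δ := by
        rw [exp_neg, exp_log (by positivity)]
        field_simp

theorem logb_two_add_logb_two_div_pos (N : ℕ) (hδ : δ ∈ Set.Ioo 0 1) :
    0 < logb 2 N + logb 2 (2 / δ) :=
  add_pos_of_nonneg_of_pos (div_nonneg (log_natCast_nonneg N) (log_nonneg one_le_two))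
    (logb_pos one_lt_two (by rw [lt_div_iff₀ hδ.1]; linarith [hδ.2]))

theorem ceil_le_sample_bound (N : ℕ) (hε : 0 < ε) (hε1 : ε ≤ 1) (hδ : δ ∈ Set.Ioo 0 1) :
    (⌈256 * ε⁻¹ ^ 2 * log (2 * N / δ)⌉₊ : ℝ) ≤ 256 * ε⁻¹ ^ 2 * (logb 2 N + logb 2 (2 / δ)) := by
  have hpos := logb_two_add_logb_two_div_pos N hδ
  rcases Nat.eq_zero_or_pos N with rfl | hN
  · have hzero : (⌈256 * ε⁻¹ ^ 2 * log (2 * (0 : ℕ) / δ)⌉₊ : ℝ) = 0 := by simp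
    exact hzero ▸ mul_nonneg (by positivity) hpos.le
  obtain ⟨hδ0, hδ1⟩ := hδ
  set L := log (2 * N / δ)
  have hlog2 : 0 < log 2 := log_pos one_lt_two
  have hsum : logb 2 N + logb 2 (2 / δ) = L / log 2 := by
    rw [logb, logb, ← add_div, ← log_mul (by positivity) (by positivity), mul_div_assoc',
      mul_comm]
  have hL : log 2 ≤ L :=
    log_le_log two_pos (by rw [le_div_iff₀ hδ0]; nlinarith [(Nat.one_le_cast.mpr hN : (1 : ℝ) ≤ N)])
  have hy : log 2 ≤ ε⁻¹ ^ 2 * L :=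
    hL.trans (le_mul_of_one_le_left (hlog2.le.trans hL) (one_le_pow₀ ((one_le_inv₀ hε).mpr hε1)))
  rw [hsum, show 256 * ε⁻¹ ^ 2 * (L / log 2) = 256 * (ε⁻¹ ^ 2 * L) / log 2 by ring,
    le_div_iff₀ hlog2]
  have hceil : (⌈256 * ε⁻¹ ^ 2 * L⌉₊ : ℝ) < 256 * (ε⁻¹ ^ 2 * L) + 1 :=
    (Nat.ceil_lt_add_one (mul_nonneg (by positivity) (hlog2.le.trans hL))).trans_eq (by ring)
  nlinarith [log_two_lt_d9, log_two_gt_d9, mul_lt_mul_of_pos_right hceil hlog2]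

end SampleSize

end OI

/-- sample complexity upper bound for distribution-specific realizable OI:
`SAMP-DS-R(P,D,ε,δ,μ) ≤ O(ε⁻²(log N_{μ,Q}(D,ε/2) + log(2/δ)))
 ≤ O(ε⁻²(log N_{μ,P}(D,ε/4) + log(2/δ)))`, where `Q = P − P`. -/
theorem statement_4 :
    ∃ c : ℝ, 0 < c ∧
      ∀ (X : Type) (_ : Nonempty X) (μ : PMF X) (P D : Set (X → ℝ)),
        P.Nonempty → (∀ p ∈ P, Predictor p) →
        D.Nonempty → (∀ d ∈ D, Dist1 d) →
        ∀ ε δ : ℝ, 0 < ε → δ ∈ Set.Ioo (0 : ℝ) 1 →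
          covN μ (P - P) D (ε / 2) ≤ covN μ P D (ε / 4) ∧
          (covN μ (P - P) D (ε / 2) ≠ ⊤ →
            ∃ n : ℕ, SAMPDSR μ P D ε δ ≤ (n : ℕ∞) ∧
              (n : ℝ) ≤ c * ε⁻¹ ^ 2 *
                (elog2 (covN μ (P - P) D (ε / 2)) + Real.logb 2 (2 / δ))) := by
  refine ⟨256, by norm_num, fun X _ μ P D hPne hP _ hD ε δ hε hδ => ⟨?_, fun hK => ?_⟩⟩
  · rw [show ε / 2 = 2 * (ε / 4) by ring]
    exact covN_sub_le hP (fun d hd => (hD d hd).abs_le_one) _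
  obtain ⟨C, hC, hCcard⟩ := exists_finset_isCover_card_eq hK
  rw [elog2, ← hCcard, ENat.toNat_natCast]
  rcases le_or_gt ε 1 with hε1 | hε1
  · exact ⟨_, sampdsr_le (dsrl_consistentChoice hP hD hε.le hC (two_mul_exp_neg_ceil_le _ hε hδ.1)),
      ceil_le_sample_bound _ hε hε1 hδ⟩
  · refine ⟨0, sampdsr_le (dsrl_const hP hD hPne.some_mem hε1.le hδ.1.le 0), ?_⟩
    push_cast
    exact mul_nonneg (by positivity) (logb_two_add_logb_two_div_pos C.card hδ).le
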